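/- Assume the Framework. Let w₁, w₂ be distinct points of Ω ∖ {0}, write k₁ := k_{w₁}, k₂ := k_{w₂}, and let k₀ be the reproducing kernel at 0. Let f ∈ H be the element with (ι f)(z) = 1 − z/w₁, and let J := f − P_{[zf]} f be its S-inner function. Then (ι J)(w₂) = 0 if and only if ⟪k₁, k₁⟫ · ⟪k₀, k₂⟫ = ⟪k₀, k₁⟫ · ⟪k₁, k₂⟫; that is, the inner function of the linear polynomial 1 − z/w₁ has the extra zero w₂ exactly when this kernel identity holds. -/

import Mathlib

open scoped ComplexInnerProductSpace

/-- A Hilbert space `H` of analytic functions on a bounded domain `Ω ⊆ ℂ` with `0 ∈ Ω`,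
realized by an injective linear map `ι` into functions, satisfying conditions
(P1)–(P4) of Cheng–Mashreghi–Ross, together with its reproducing kernels. -/
structure RKFramework (Ω : Set ℂ) (H : Type*) [NormedAddCommGroup H]
    [InnerProductSpace ℂ H] [CompleteSpace H] where
  /-- `Ω` is open. -/
  isOpen : IsOpen Ω
  /-- `Ω` is connected. -/
  isConnected : IsConnected Ω
  /-- `Ω` is bounded. -/
  isBounded : Bornology.IsBounded Ω
  /-- `0 ∈ Ω`. -/
  zero_mem : (0 : ℂ) ∈ Ω
  /-- the realization of elements of `H` as functions (only values on `Ω` matter). -/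
  ι : H →ₗ[ℂ] (ℂ → ℂ)
  /-- `ι` is injective as a map into functions on `Ω`. -/
  ι_inj : ∀ f g : H, Set.EqOn (ι f) (ι g) Ω → f = g
  /-- each `ι f` is analytic on `Ω`. -/
  analytic : ∀ f : H, DifferentiableOn ℂ (ι f) Ω
  /-- (P1): point evaluation of every derivative is a bounded functional. -/
  eval_bounded : ∀ w ∈ Ω, ∀ j : ℕ, ∃ C : ℝ, ∀ f : H,
    ‖iteratedDerivWithin j (ι f) Ω w‖ ≤ C * ‖f‖
  /-- (P2): the shift operator `S`. -/
  S : H →L[ℂ] H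
  ι_S : ∀ f : H, ∀ z ∈ Ω, ι (S f) z = z * ι f z
  /-- (P3): the monomials `z^j` belong to `H` … -/
  p : ℕ → H
  ι_p : ∀ j : ℕ, ∀ z ∈ Ω, ι (p j) z = z ^ j
  /-- … and the polynomials are dense in `H`. -/
  span_p : (Submodule.span ℂ (Set.range p)).topologicalClosure = ⊤
  /-- (P4): the difference-quotient operators `Q_w`. -/
  Q : ℂ → H →L[ℂ] H
  ι_Q : ∀ w ∈ Ω, ∀ f : H, ∀ z ∈ Ω, z ≠ w → ι (Q w f) z = (ι f z - ι f w) / (z - w)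
  /-- the reproducing kernel `k_w` at `w ∈ Ω` … -/
  k : ℂ → H
  /-- … satisfying `⟪f, k_w⟫ = (ι f)(w)` (with the paper's inner product linear in its
  first slot; Mathlib's inner product is linear in the second slot). -/
  reproducing : ∀ w ∈ Ω, ∀ f : H, ⟪k w, f⟫ = ι f w

variable {Ω : Set ℂ} {H : Type*} [NormedAddCommGroup H] [InnerProductSpace ℂ H] [CompleteSpace H]

/-- `[zf]`: the closed linear span of `{S^n f : n ≥ 1}`. -/
abbrev RKFramework.zspan (F : RKFramework Ω H) (f : H) : Submodule ℂ H :=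
  (Submodule.span ℂ {x | ∃ n : ℕ, 1 ≤ n ∧ x = (F.S ^ n) f}).topologicalClosure

/-- `[f]`: the closed linear span of `{S^n f : n ≥ 0}`. -/
abbrev RKFramework.fullSpan (F : RKFramework Ω H) (f : H) : Submodule ℂ H :=
  (Submodule.span ℂ (Set.range fun n : ℕ => (F.S ^ n) f)).topologicalClosure

/-- The `S`-inner function `J = f − P_{[zf]} f` associated with `f`. -/
noncomputable def RKFramework.J (F : RKFramework Ω H) (f : H) : H :=
  f - (Submodule.orthogonalProjectionOnto (F.zspan f) f : H)

/-! Since `ι f` vanishes on `Ω` only at `w₁`, the space `[zf]ᗮ` is spanned by `k₀` and `k_{w₁}`: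
an element orthogonal to `1` and to `f, S f, S² f, …` is orthogonal to every monomial, because
`z^{j+1} = w₁ z^j - w₁ z^j (1 - z/w₁)`, hence vanishes by density of the polynomials.
Writing `J = a k₀ + b k_{w₁}`, the reproducing identities `⟪k₀, J⟫ = f(0) = 1` and
`⟪k_{w₁}, J⟫ = f(w₁) = 0` are a `2 × 2` linear system for `(a, b)`, and
`J(w₂) = a ⟪k_{w₂}, k₀⟫ + b ⟪k_{w₂}, k_{w₁}⟫` vanishes exactly when the stated determinant does. -/

open scoped InnerProductSpace

theorem Submodule.mem_orthogonal_closure_span_iff {𝕜 E : Type*} [RCLike 𝕜] [NormedAddCommGroup E]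
    [InnerProductSpace 𝕜 E] {s : Set E} {x : E} :
    x ∈ (Submodule.span 𝕜 s).topologicalClosureᗮ ↔ ∀ u ∈ s, ⟪u, x⟫_𝕜 = 0 := by
  rw [Submodule.orthogonal_closure, ← Submodule.span_singleton_le_iff_mem,
    ← Submodule.isOrtho_iff_le, Submodule.isOrtho_comm, Submodule.isOrtho_span]
  simp

theorem mul_add_mul_eq_zero_iff_of_mul_add_mul_eq {K : Type*} [Field K] {a b p q r s c d : K}
    (hs : s ≠ 0) (h₁ : a * p + b * q = 1) (h₂ : a * r + b * s = 0) :
    a * c + b * d = 0 ↔ s * c = r * d := by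
  have ha : a ≠ 0 := by
    rintro rfl
    have hb : b = 0 := by simpa [hs] using h₂
    simp [hb] at h₁
  have key : s * (a * c + b * d) = a * (s * c - r * d) := by linear_combination d * h₂
  rw [← mul_right_inj' hs, mul_zero, key, mul_eq_zero, or_iff_right ha, sub_eq_zero]

namespace RKFramework

variable (F : RKFramework Ω H)

theorem inner_k_right (x : H) {w : ℂ} (hw : w ∈ Ω) :
    ⟪x, F.k w⟫ = starRingEnd ℂ (F.ι x w) := by
  rw [← F.reproducing w hw x, inner_conj_symm]

theorem k_ne_zero {w : ℂ} (hw : w ∈ Ω) : F.k w ≠ 0 := by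
  intro h
  have h1 := F.reproducing w hw (F.p 0)
  rw [h, inner_zero_left, F.ι_p 0 w hw, pow_zero] at h1
  exact zero_ne_one h1

theorem ι_S_pow (f : H) (n : ℕ) {z : ℂ} (hz : z ∈ Ω) :
    F.ι ((F.S ^ n) f) z = z ^ n * F.ι f z := by
  induction n with
  | zero => simp
  | succ n ih =>
    rw [pow_succ', mul_apply_eq_comp, F.ι_S _ z hz, ih, pow_succ']
    ring

theorem eq_zero_of_forall_inner_p_eq_zero {y : H} (h : ∀ j, ⟪F.p j, y⟫ = 0) : y = 0 := by
  have hy : y ∈ (Submodule.span ℂ (Set.range F.p)).topologicalClosureᗮ :=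
    Submodule.mem_orthogonal_closure_span_iff.mpr (by simpa using h)
  rwa [F.span_p, Submodule.top_orthogonal_eq_bot, Submodule.mem_bot] at hy

theorem mem_orthogonal_zspan_iff {f x : H} :
    x ∈ (F.zspan f)ᗮ ↔ ∀ n, 1 ≤ n → ⟪(F.S ^ n) f, x⟫ = 0 := by
  rw [Submodule.mem_orthogonal_closure_span_iff]
  refine ⟨fun h n hn => h _ ⟨n, hn, rfl⟩, ?_⟩
  rintro h _ ⟨n, hn, rfl⟩
  exact h n hn

theorem k_mem_orthogonal_zspan {f : H} {w : ℂ} (hw : w ∈ Ω) (hfw : w * F.ι f w = 0) :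
    F.k w ∈ (F.zspan f)ᗮ := by
  refine F.mem_orthogonal_zspan_iff.mpr fun n hn => ?_
  obtain ⟨m, rfl⟩ := Nat.exists_eq_add_of_le' hn
  rw [F.inner_k_right _ hw, F.ι_S_pow f _ hw, pow_succ, mul_assoc, hfw, mul_zero, map_zero]

theorem J_mem_orthogonal_zspan (f : H) : F.J f ∈ (F.zspan f)ᗮ :=
  Submodule.sub_starProjection_mem_orthogonal f

theorem inner_k_J {f : H} {w : ℂ} (hw : w ∈ Ω) (hk : F.k w ∈ (F.zspan f)ᗮ) :
    ⟪F.k w, F.J f⟫ = F.ι f w := by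
  rw [J, inner_sub_right, Submodule.inner_left_of_mem_orthogonal (Submodule.coe_mem _) hk,
    sub_zero, F.reproducing w hw]

section LinearPolynomial

variable {F} {w₁ : ℂ} {f : H}

theorem p_succ_eq (h1z : w₁ ≠ 0) (hf : ∀ z ∈ Ω, F.ι f z = 1 - z / w₁) (j : ℕ) :
    F.p (j + 1) = w₁ • F.p j - w₁ • (F.S ^ j) f := by
  refine F.ι_inj _ _ fun z hz => ?_
  simp only [map_sub, map_smul, Pi.sub_apply, Pi.smul_apply, smul_eq_mul]
  rw [F.ι_p _ z hz, F.ι_p _ z hz, F.ι_S_pow f j hz, hf z hz]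
  field_simp
  ring

theorem eq_zero_of_mem_orthogonal_zspan (h1z : w₁ ≠ 0) (hf : ∀ z ∈ Ω, F.ι f z = 1 - z / w₁)
    {y : H} (hy : y ∈ (F.zspan f)ᗮ) (hfy : ⟪f, y⟫ = 0) (hp0y : ⟪F.p 0, y⟫ = 0) : y = 0 := by
  have hSy : ∀ n, ⟪(F.S ^ n) f, y⟫ = 0 := by
    rintro (_ | n)
    · simpa using hfy
    · exact F.mem_orthogonal_zspan_iff.mp hy _ n.succ_pos
  refine F.eq_zero_of_forall_inner_p_eq_zero fun j => ?_
  induction j with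
  | zero => exact hp0y
  | succ j ih =>
    rw [p_succ_eq h1z hf, inner_sub_left, inner_smul_left, inner_smul_left, ih, hSy j]
    simp

theorem orthogonal_zspan_eq_span_pair (h1 : w₁ ∈ Ω) (h1z : w₁ ≠ 0)
    (hf : ∀ z ∈ Ω, F.ι f z = 1 - z / w₁) :
    (F.zspan f)ᗮ = Submodule.span ℂ {F.k 0, F.k w₁} := by
  have hk0 : F.k 0 ∈ (F.zspan f)ᗮ := F.k_mem_orthogonal_zspan F.zero_mem (zero_mul _)
  have hk1 : F.k w₁ ∈ (F.zspan f)ᗮ := by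
    refine F.k_mem_orthogonal_zspan h1 ?_
    rw [hf w₁ h1, div_self h1z, sub_self, mul_zero]
  refine le_antisymm (fun x hx => ?_)
    (Submodule.span_le.mpr (Set.insert_subset_iff.mpr ⟨hk0, Set.singleton_subset_iff.mpr hk1⟩))
  have hfk0 : ⟪f, F.k 0⟫ = 1 := by simp [F.inner_k_right f F.zero_mem, hf 0 F.zero_mem]
  have hfk1 : ⟪f, F.k w₁⟫ = 0 := by simp [F.inner_k_right f h1, hf w₁ h1, h1z]
  have hpk0 : ⟪F.p 0, F.k 0⟫ = 1 := by simp [F.inner_k_right _ F.zero_mem, F.ι_p 0 0 F.zero_mem]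
  have hpk1 : ⟪F.p 0, F.k w₁⟫ = 1 := by simp [F.inner_k_right _ h1, F.ι_p 0 w₁ h1]
  refine Submodule.mem_span_pair.mpr ⟨⟪f, x⟫, ⟪F.p 0, x⟫ - ⟪f, x⟫, ?_⟩
  rw [eq_comm, ← sub_eq_zero]
  refine eq_zero_of_mem_orthogonal_zspan h1z hf (Submodule.sub_mem _ hx
    (Submodule.add_mem _ (Submodule.smul_mem _ _ hk0) (Submodule.smul_mem _ _ hk1))) ?_ ?_
  · simp [hfk0, hfk1]
  · simp [hpk0, hpk1]

end LinearPolynomial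

end RKFramework

theorem stmt15_general (F : RKFramework Ω H)
    (w₁ w₂ : ℂ) (h1 : w₁ ∈ Ω) (h2 : w₂ ∈ Ω) (h1z : w₁ ≠ 0)
    (f : H) (hf : ∀ z ∈ Ω, F.ι f z = 1 - z / w₁) :
    F.ι (F.J f) w₂ = 0 ↔
      ⟪F.k w₁, F.k w₁⟫ * ⟪F.k w₂, F.k 0⟫ = ⟪F.k w₁, F.k 0⟫ * ⟪F.k w₂, F.k w₁⟫ := by
  have hspan := RKFramework.orthogonal_zspan_eq_span_pair h1 h1z hf
  have hk0 : F.k 0 ∈ (F.zspan f)ᗮ := hspan ▸ Submodule.subset_span (by simp)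
  have hk1 : F.k w₁ ∈ (F.zspan f)ᗮ := hspan ▸ Submodule.subset_span (by simp)
  obtain ⟨a, b, hab⟩ := Submodule.mem_span_pair.mp (hspan ▸ F.J_mem_orthogonal_zspan f)
  have hJ : ∀ w, ⟪F.k w, F.J f⟫ = a * ⟪F.k w, F.k 0⟫ + b * ⟪F.k w, F.k w₁⟫ := fun w => by
    rw [← hab, inner_add_right, inner_smul_right, inner_smul_right]
  have hJ0 : a * ⟪F.k 0, F.k 0⟫ + b * ⟪F.k 0, F.k w₁⟫ = 1 := by
    rw [← hJ, F.inner_k_J F.zero_mem hk0, hf 0 F.zero_mem, zero_div, sub_zero]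
  have hJ1 : a * ⟪F.k w₁, F.k 0⟫ + b * ⟪F.k w₁, F.k w₁⟫ = 0 := by
    rw [← hJ, F.inner_k_J h1 hk1, hf w₁ h1, div_self h1z, sub_self]
  rw [← F.reproducing w₂ h2, hJ]
  exact mul_add_mul_eq_zero_iff_of_mul_add_mul_eq (inner_self_ne_zero.mpr (F.k_ne_zero h1)) hJ0 hJ1

/-- The `S`-inner function `J` of the linear polynomial `1 − z/w₁` has the extra zero
`w₂` precisely when `⟪k₁,k₁⟫⟪k₀,k₂⟫ = ⟪k₀,k₁⟫⟪k₁,k₂⟫` (stated in the paper's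
inner product, linear in the first slot; Mathlib's is linear in the second, so
paper `⟪x, y⟫` is Mathlib `⟪y, x⟫`). -/
theorem stmt15 (F : RKFramework Ω H)
    (w₁ w₂ : ℂ) (h1 : w₁ ∈ Ω) (h2 : w₂ ∈ Ω) (h1z : w₁ ≠ 0) (h2z : w₂ ≠ 0)
    (hne : w₁ ≠ w₂)
    (f : H) (hf : ∀ z ∈ Ω, F.ι f z = 1 - z / w₁) :
    F.ι (F.J f) w₂ = 0 ↔
      ⟪F.k w₁, F.k w₁⟫ * ⟪F.k w₂, F.k 0⟫ = ⟪F.k w₁, F.k 0⟫ * ⟪F.k w₂, F.k w₁⟫ :=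
  stmt15_general F w₁ w₂ h1 h2 h1z f hf
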